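/- arXiv:0906.3890 — 2 statements merged into one kernel-verified Lean document; each statement's English description precedes it below -/
import Mathlib

section
/- Let Λ_g be the set of block sizes occurring in partitions of a category of partitions D, and Λ_k the set of block sizes occurring in the noncrossing partitions of D. Then Λ_k ⊆ Λ_g ⊆ Λ_k ∪ (Λ_k − 1). -/
/-- A partition between `k` upper and `l` lower points, viewed as the
equivalence relation (setoid) on the points whose classes are the blocks. -/
abbrev PartitionKL (k l : ℕ) := Setoid (Fin k ⊕ Fin l)

/-- Placing two partitions side by side (disjoint union). -/
def sideBySide {α β : Type*} (p : Setoid α) (q : Setoid β) : Setoid (α ⊕ β) where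
  r x y := match x, y with
    | .inl a, .inl b => p a b
    | .inr a, .inr b => q a b
    | _, _ => False
  iseqv := by
    constructor
    · rintro (a | a)
      · exact p.refl a
      · exact q.refl a
    · rintro (a | a) (b | b) h
      · exact p.symm h
      · exact h.elim
      · exact h.elim
      · exact q.symm h
    · rintro (a | a) (b | b) (c | c) h1 h2 <;> first
        | exact h1.elim | exact h2.elim
        | exact p.trans h1 h2 | exact q.trans h1 h2

/-- Horizontal concatenation (tensor product) of partitions. -/
def tensorPart {k l k' l' : ℕ} (p : PartitionKL k l) (q : PartitionKL k' l') :
    PartitionKL (k + k') (l + l') :=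
  Setoid.comap (fun x => match x with
    | .inl i => match finSumFinEquiv.symm i with
      | .inl a => Sum.inl (Sum.inl a)
      | .inr a => Sum.inr (Sum.inl a)
    | .inr j => match finSumFinEquiv.symm j with
      | .inl b => Sum.inl (Sum.inr b)
      | .inr b => Sum.inr (Sum.inr b))
    (sideBySide p q)

/-- Vertical concatenation (composition) of partitions: place `p ∈ P(k,l)` on
top of `q ∈ P(l,m)`, join blocks across the middle `l` points, and restrict to
the outer `k + m` points (closed middle components disappear). -/
def compPart {k l m : ℕ} (p : PartitionKL k l) (q : PartitionKL l m) :
    PartitionKL k m :=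
  Setoid.comap (Sum.map id Sum.inr)
    (Relation.EqvGen.setoid (fun x y : Fin k ⊕ (Fin l ⊕ Fin m) => match x, y with
      | .inl a, .inl b => p (.inl a) (.inl b)
      | .inl a, .inr (.inl b) => p (.inl a) (.inr b)
      | .inr (.inl a), .inl b => p (.inr a) (.inl b)
      | .inr (.inl a), .inr (.inl b) => p (.inr a) (.inr b) ∨ q (.inl a) (.inl b)
      | .inr (.inl a), .inr (.inr b) => q (.inl a) (.inr b)
      | .inr (.inr a), .inr (.inl b) => q (.inr a) (.inl b)
      | .inr (.inr a), .inr (.inr b) => q (.inr a) (.inr b)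
      | _, _ => False))

/-- Upside-down turning of a partition. -/
def flipPart {k l : ℕ} (p : PartitionKL k l) : PartitionKL l k :=
  Setoid.comap Sum.swap p

/-- A category of partitions: a collection `D(k,l) ⊆ P(k,l)` closed under
horizontal and vertical concatenation and upside-down turning, and containing
the identity pairing and the semicircle `∩ ∈ P(0,2)`. -/
structure PartitionCategory where
  mem : ∀ k l : ℕ, Set (PartitionKL k l)
  tensor_mem : ∀ {k l k' l'} {p : PartitionKL k l} {q : PartitionKL k' l'},
    p ∈ mem k l → q ∈ mem k' l' → tensorPart p q ∈ mem (k + k') (l + l')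
  comp_mem : ∀ {k l m} {p : PartitionKL k l} {q : PartitionKL l m},
    p ∈ mem k l → q ∈ mem l m → compPart p q ∈ mem k m
  flip_mem : ∀ {k l} {p : PartitionKL k l}, p ∈ mem k l → flipPart p ∈ mem l k
  id_mem : (⊤ : PartitionKL 1 1) ∈ mem 1 1
  semicircle_mem : (⊤ : PartitionKL 0 2) ∈ mem 0 2

/-- The position of a point when the `k + l` points are traversed
counterclockwise starting from bottom left. -/
def ord {k l : ℕ} : Fin k ⊕ Fin l → ℕ
  | .inl i => l + (k - 1 - i.val)
  | .inr j => j.val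

/-- A partition is noncrossing when its strings can be drawn without
crossings. -/
def NoncrossingKL {k l : ℕ} (p : PartitionKL k l) : Prop :=
  ∀ a b c d : Fin k ⊕ Fin l, ord a < ord b → ord b < ord c → ord c < ord d →
    p a c → p b d → p a b

/-- The set of block sizes occurring in partitions of the category `C`. -/
def lambdaG (C : PartitionCategory) : Set ℕ :=
  {n | ∃ k l, ∃ p ∈ C.mem k l, ∃ x, n = Set.ncard {y | p x y}}

/-- The set of block sizes occurring in noncrossing partitions of `C`. -/
def lambdaK (C : PartitionCategory) : Set ℕ :=
  {n | ∃ k l, ∃ p ∈ C.mem k l, NoncrossingKL p ∧ ∃ x, n = Set.ncard {y | p x y}}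

/-!
Capping two neighbouring points of a row with a semicircle keeps a partition in the category;
it removes the two points and merges their blocks `B₁`, `B₂` into one block of size
`|B₁ ∪ B₂| - 2`, leaving all other blocks alone. Fix `m ≥ 1` and a partition in the category
with a block `B` of at least `m` points. If the partition is noncrossing and `|B| ≤ m + 1`, we
are done. If `|B| ≥ m + 2`, cap any two neighbours. Otherwise the partition crosses, and since a
partition whose blocks other than `B` are singletons is noncrossing, some block `B' ≠ B` has two
points; cap a point of `B'` with a neighbour. Either the neighbour is outside `B` and `B`
survives, or it is in `B` and the merged block has at least `m + 2 - 2` points. Induction on the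
number of points produces a noncrossing partition in the category with a block of size `m` or
`m + 1`.
-/

namespace Setoid

variable {α : Type*}

def mergeClasses (p : Setoid α) (a b : α) : Setoid α where
  r x y := p x y ∨ ((p x a ∨ p x b) ∧ (p y a ∨ p y b))
  iseqv := by
    refine ⟨fun x => Or.inl (p.refl x), ?_, ?_⟩
    · rintro x y (h | ⟨hx, hy⟩)
      · exact Or.inl (p.symm h)
      · exact Or.inr ⟨hy, hx⟩
    · rintro x y z (hxy | ⟨hx, hy⟩) (hyz | ⟨hy', hz⟩)
      · exact Or.inl (p.trans hxy hyz)
      · exact Or.inr ⟨hy'.imp (p.trans hxy) (p.trans hxy), hz⟩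
      · exact Or.inr ⟨hx, hy.imp (p.trans (p.symm hyz)) (p.trans (p.symm hyz))⟩
      · exact Or.inr ⟨hx, hz⟩

@[simp]
lemma mergeClasses_apply (p : Setoid α) (a b x y : α) :
    p.mergeClasses a b x y ↔ p x y ∨ ((p x a ∨ p x b) ∧ (p y a ∨ p y b)) :=
  Iff.rfl

variable {p s : Setoid α} {a b x : α}

lemma le_mergeClasses : p ≤ p.mergeClasses a b := fun _ _ => Or.inl

lemma mergeClasses_rel : p.mergeClasses a b a b :=
  Or.inr ⟨Or.inl (p.refl a), Or.inr (p.refl b)⟩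

lemma mergeClasses_le (hp : p ≤ s) (hab : s a b) : p.mergeClasses a b ≤ s := by
  have to_a : ∀ {y}, p y a ∨ p y b → s y a :=
    fun h => h.elim (fun h => hp h) (fun h => s.trans (hp h) (s.symm hab))
  rintro x y (h | ⟨hx, hy⟩)
  · exact hp h
  · exact s.trans (to_a hx) (s.symm (to_a hy))

lemma setOf_mergeClasses_of_not_rel (ha : ¬ p x a) (hb : ¬ p x b) :
    {y | p.mergeClasses a b x y} = {y | p x y} := by
  ext y
  simp [ha, hb]

lemma setOf_mergeClasses_of_rel (h : p x a ∨ p x b) :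
    {y | p.mergeClasses a b x y} = {y | p a y} ∪ {y | p b y} := by
  ext y
  simp only [Set.mem_ofPred_eq, Set.mem_union, mergeClasses_apply, eq_true h, true_and]
  constructor
  · rintro (hy | hy | hy)
    · exact h.imp (fun h => p.trans (p.symm h) hy) (fun h => p.trans (p.symm h) hy)
    · exact Or.inl (p.symm hy)
    · exact Or.inr (p.symm hy)
  · exact fun hy => Or.inr (hy.imp p.symm p.symm)

end Setoid

section sideBySide

variable {α β : Type*} (p : Setoid α) (q : Setoid β)

@[simp] lemma sideBySide_inl_inl (a b : α) : sideBySide p q (.inl a) (.inl b) ↔ p a b := Iff.rfl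
@[simp] lemma sideBySide_inr_inr (a b : β) : sideBySide p q (.inr a) (.inr b) ↔ q a b := Iff.rfl
@[simp] lemma sideBySide_inl_inr (a : α) (b : β) : ¬ sideBySide p q (.inl a) (.inr b) := id
@[simp] lemma sideBySide_inr_inl (a : β) (b : α) : ¬ sideBySide p q (.inr a) (.inl b) := id

end sideBySide

def tensorSplit {k l k' l' : ℕ} :
    Fin (k + k') ⊕ Fin (l + l') → (Fin k ⊕ Fin l) ⊕ (Fin k' ⊕ Fin l') :=
  Sum.elim (fun i => (finSumFinEquiv.symm i).elim (Sum.inl ∘ Sum.inl) (Sum.inr ∘ Sum.inl))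
    (fun j => (finSumFinEquiv.symm j).elim (Sum.inl ∘ Sum.inr) (Sum.inr ∘ Sum.inr))

lemma tensorPart_apply {k l k' l' : ℕ} (p : PartitionKL k l) (q : PartitionKL k' l') (x y) :
    tensorPart p q x y ↔ sideBySide p q (tensorSplit x) (tensorSplit y) := by
  unfold tensorPart
  rw [Setoid.comap_rel]
  rcases x with x | x <;> rcases y with y | y <;>
    rcases hx : finSumFinEquiv.symm x with x' | x' <;>
    rcases hy : finSumFinEquiv.symm y with y' | y' <;> simp [tensorSplit, hx, hy]

@[simp]
lemma flipPart_apply {k l : ℕ} (p : PartitionKL k l) (x y) : flipPart p x y ↔ p x.swap y.swap :=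
  Iff.rfl

def idPart (m : ℕ) : PartitionKL m m := Setoid.ker (Sum.elim Fin.val Fin.val)

@[simp]
lemma idPart_apply {m : ℕ} (x y : Fin m ⊕ Fin m) :
    idPart m x y ↔ Sum.elim Fin.val Fin.val x = Sum.elim Fin.val Fin.val y :=
  Iff.rfl

lemma tensorPart_idPart_top (m : ℕ) :
    tensorPart (idPart m) (⊤ : PartitionKL 1 1) = idPart (m + 1) := by
  ext x y
  rcases x with x | x <;> rcases y with y | y <;>
    cases x using Fin.addCases <;> cases y using Fin.addCases <;>
    simp [tensorPart_apply, tensorSplit] <;> omega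

-- Tensoring with `flipPart ⊤ : PartitionKL 2 0` leaves lower points in `Fin (j + 0)`.
lemma finSumFinEquiv_symm_add_zero {n : ℕ} (b : Fin (n + 0)) :
    (finSumFinEquiv (m := n) (n := 0)).symm b = .inl b := by
  rw [Equiv.symm_apply_eq]
  rfl

def capLast (j : ℕ) : PartitionKL (j + 2) j :=
  Setoid.comap (Sum.elim id (Fin.castAdd 2))
    ((⊥ : Setoid (Fin (j + 2))).mergeClasses ⟨j, by omega⟩ ⟨j + 1, by omega⟩)

@[simp]
lemma capLast_apply (j : ℕ) (x y) : capLast j x y ↔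
    (⊥ : Setoid (Fin (j + 2))).mergeClasses ⟨j, by omega⟩ ⟨j + 1, by omega⟩
      (Sum.elim id (Fin.castAdd 2) x) (Sum.elim id (Fin.castAdd 2) y) :=
  Iff.rfl

lemma tensorPart_idPart_flipPart_top (j : ℕ) :
    tensorPart (idPart j) (flipPart (⊤ : PartitionKL 0 2)) = capLast j := by
  ext x y
  rw [tensorPart_apply]
  rcases x with x | x <;> rcases y with y | y <;>
    (try cases x using Fin.addCases) <;> (try cases y using Fin.addCases) <;>
    (try exact ‹Fin 0›.elim0) <;>
    simp [tensorSplit, finSumFinEquiv_symm_add_zero] <;>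
    simp only [Fin.ext_iff, Fin.val_castAdd, Fin.val_natAdd] <;> omega

def skipPair (j m : ℕ) (v : Fin (j + m)) : Fin (j + 2 + m) :=
  if v.val < j then ⟨v.val, by omega⟩ else ⟨v.val + 2, by omega⟩

lemma val_skipPair {j m : ℕ} (v : Fin (j + m)) :
    (skipPair j m v).val = if v.val < j then v.val else v.val + 2 := by
  unfold skipPair
  split_ifs <;> rfl

lemma skipPair_injective (j m : ℕ) : Function.Injective (skipPair j m) := by
  intro v w h
  rw [Fin.ext_iff, val_skipPair, val_skipPair] at h
  ext
  split_ifs at h <;> omega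

lemma range_skipPair (j m : ℕ) :
    Set.range (skipPair j m) = {⟨j, by omega⟩, ⟨j + 1, by omega⟩}ᶜ := by
  ext w
  simp only [Set.mem_range, Set.mem_compl_iff, Set.mem_insert_iff, Set.mem_singleton_iff,
    Fin.ext_iff, val_skipPair]
  constructor
  · rintro ⟨v, hv⟩
    split_ifs at hv <;> omega
  · intro hw
    by_cases hwj : w.val < j
    · exact ⟨⟨w.val, by omega⟩, by simp [hwj]⟩
    · exact ⟨⟨w.val - 2, by omega⟩, by simp only; split_ifs <;> omega⟩

def capAt (j m : ℕ) : PartitionKL (j + 2 + m) (j + m) := tensorPart (capLast j) (idPart m)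

lemma capAt_apply (j m : ℕ) (x y : Fin (j + 2 + m) ⊕ Fin (j + m)) : capAt j m x y ↔
    (⊥ : Setoid (Fin (j + 2 + m))).mergeClasses ⟨j, by omega⟩ ⟨j + 1, by omega⟩
      (Sum.elim id (skipPair j m) x) (Sum.elim id (skipPair j m) y) := by
  rw [capAt, tensorPart_apply]
  rcases x with x | x <;> rcases y with y | y <;>
    cases x using Fin.addCases <;> cases y using Fin.addCases <;>
    simp [tensorSplit, Fin.ext_iff, val_skipPair] <;> omega

-- The relation generating `compPart p q` on upper, middle and lower points, as in its definition.
def compRel {k l m : ℕ} (p : PartitionKL k l) (q : PartitionKL l m) :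
    Fin k ⊕ (Fin l ⊕ Fin m) → Fin k ⊕ (Fin l ⊕ Fin m) → Prop
  | .inl a, .inl b => p (.inl a) (.inl b)
  | .inl a, .inr (.inl b) => p (.inl a) (.inr b)
  | .inr (.inl a), .inl b => p (.inr a) (.inl b)
  | .inr (.inl a), .inr (.inl b) => p (.inr a) (.inr b) ∨ q (.inl a) (.inl b)
  | .inr (.inl a), .inr (.inr b) => q (.inl a) (.inr b)
  | .inr (.inr a), .inr (.inl b) => q (.inr a) (.inl b)
  | .inr (.inr a), .inr (.inr b) => q (.inr a) (.inr b)
  | _, _ => False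

section capping

variable {k j m : ℕ} (p : PartitionKL k (j + 2 + m))

lemma compPart_capAt :
    compPart p (capAt j m) = Setoid.comap (Sum.map id (skipPair j m))
      (p.mergeClasses (.inr ⟨j, by omega⟩) (.inr ⟨j + 1, by omega⟩)) := by
  set merged := p.mergeClasses (.inr ⟨j, by omega⟩) (.inr ⟨j + 1, by omega⟩)
  have cap_le : ∀ s t, capAt j m s t →
      merged (.inr (Sum.elim id (skipPair j m) s)) (.inr (Sum.elim id (skipPair j m) t)) := by
    intro s t hst
    rw [capAt_apply] at hst
    exact Setoid.mergeClasses_le (s := merged.comap Sum.inr) bot_le Setoid.mergeClasses_rel hst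
  apply le_antisymm
  · intro a b hab
    have hle : Relation.EqvGen.setoid (compRel p (capAt j m)) ≤
        merged.comap (Sum.map id (Sum.elim id (skipPair j m))) := by
      apply Setoid.eqvGen_le
      rintro (x | x | x) (y | y | y) hxy
      all_goals first
        | exact hxy.elim
        | exact Setoid.le_mergeClasses hxy
        | exact cap_le _ _ hxy
        | exact hxy.elim (fun h => Setoid.le_mergeClasses h) (cap_le _ _)
    rcases a with a | a <;> rcases b with b | b <;> exact hle hab
  · intro a b hab
    let lift : Fin k ⊕ Fin (j + 2 + m) → Fin k ⊕ (Fin (j + 2 + m) ⊕ Fin (j + m)) :=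
      Sum.map id .inl
    have hle : merged ≤ (Relation.EqvGen.setoid (compRel p (capAt j m))).comap lift := by
      apply Setoid.mergeClasses_le
      · rintro (c | c) (d | d) hcd <;> apply Relation.EqvGen.rel
        all_goals first | exact hcd | exact Or.inl hcd
      · apply Relation.EqvGen.rel
        exact Or.inr ((capAt_apply ..).2 Setoid.mergeClasses_rel)
    have bridge : ∀ c, Relation.EqvGen (compRel p (capAt j m))
        (Sum.map id .inr c) (lift (Sum.map id (skipPair j m) c)) := by
      rintro (c | c)
      · exact Relation.EqvGen.refl _
      · exact Relation.EqvGen.rel _ _ ((capAt_apply ..).2 (Or.inl rfl))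
    exact ((bridge a).trans _ _ _ (hle hab)).trans _ _ _ (bridge b).symm

lemma ncard_preimage_map_skipPair (S : Set (Fin k ⊕ Fin (j + 2 + m))) :
    (Sum.map id (skipPair j m) ⁻¹' S).ncard =
      (S \ {.inr ⟨j, by omega⟩, .inr ⟨j + 1, by omega⟩}).ncard := by
  rw [← Set.ncard_image_of_injective _
      (Sum.map_injective.2 ⟨Function.injective_id, skipPair_injective j m⟩),
    Set.image_preimage_eq_inter_range]
  congr 1
  ext (w | w)
  · simp
  · have := congrArg (w ∈ ·) (range_skipPair j m)
    simp_all

lemma exists_map_skipPair_eq {x : Fin k ⊕ Fin (j + 2 + m)} (hj : x ≠ .inr ⟨j, by omega⟩)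
    (hj' : x ≠ .inr ⟨j + 1, by omega⟩) : ∃ z, Sum.map id (skipPair j m) z = x := by
  rcases x with x | x
  · exact ⟨.inl x, rfl⟩
  · have hx : x ∈ Set.range (skipPair j m) := by
      rw [range_skipPair]
      simp_all
    obtain ⟨z, rfl⟩ := hx
    exact ⟨.inr z, rfl⟩

lemma setOf_compPart_capAt (z : Fin k ⊕ Fin (j + m)) :
    {y | compPart p (capAt j m) z y} = Sum.map id (skipPair j m) ⁻¹'
      {y | p.mergeClasses (.inr ⟨j, by omega⟩) (.inr ⟨j + 1, by omega⟩)
        (Sum.map id (skipPair j m) z) y} := by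
  rw [compPart_capAt]
  rfl

lemma ncard_compPart_capAt_of_not_rel (z : Fin k ⊕ Fin (j + m))
    (hj : ¬ p (Sum.map id (skipPair j m) z) (.inr ⟨j, by omega⟩))
    (hj' : ¬ p (Sum.map id (skipPair j m) z) (.inr ⟨j + 1, by omega⟩)) :
    {y | compPart p (capAt j m) z y}.ncard = {y | p (Sum.map id (skipPair j m) z) y}.ncard := by
  rw [setOf_compPart_capAt, ncard_preimage_map_skipPair,
    Setoid.setOf_mergeClasses_of_not_rel hj hj']
  congr 1
  ext y
  simp only [Set.mem_sdiff, Set.mem_ofPred_eq, Set.mem_insert_iff, Set.mem_singleton_iff,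
    and_iff_left_iff_imp]
  rintro hy (rfl | rfl) <;> contradiction

lemma ncard_compPart_capAt_of_rel (z : Fin k ⊕ Fin (j + m))
    (h : p (Sum.map id (skipPair j m) z) (.inr ⟨j, by omega⟩) ∨
      p (Sum.map id (skipPair j m) z) (.inr ⟨j + 1, by omega⟩)) :
    {y | compPart p (capAt j m) z y}.ncard + 2 =
      ({y | p (.inr ⟨j, by omega⟩) y} ∪ {y | p (.inr ⟨j + 1, by omega⟩) y}).ncard := by
  rw [setOf_compPart_capAt, ncard_preimage_map_skipPair, Setoid.setOf_mergeClasses_of_rel h]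
  have pair_sub : {.inr ⟨j, by omega⟩, .inr ⟨j + 1, by omega⟩} ⊆
      {y | p (.inr ⟨j, by omega⟩) y} ∪ {y | p (.inr ⟨j + 1, by omega⟩) y} := by
    rintro y (rfl | rfl)
    · exact Or.inl (p.refl _)
    · exact Or.inr (p.refl _)
  have := Set.ncard_sdiff_add_ncard_of_subset pair_sub
  rwa [Set.ncard_pair (by simp)] at this

end capping

lemma ncard_preimage_swap {α β : Type*} (S : Set (α ⊕ β)) :
    (Sum.swap ⁻¹' S).ncard = S.ncard :=
  Set.ncard_preimage_of_injective_subset_range Sum.swap_leftInverse.injective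
    fun y _ => ⟨y.swap, Sum.swap_swap y⟩

lemma setOf_flipPart_swap {k l : ℕ} (p : PartitionKL k l) (x : Fin k ⊕ Fin l) :
    {y | flipPart p x.swap y} = Sum.swap ⁻¹' {y | p x y} := by
  ext y
  simp

lemma noncrossingKL_of_one_nontrivial_block {k l : ℕ} {p : PartitionKL k l}
    (x : Fin k ⊕ Fin l) (h : ∀ y z, p y z → y ≠ z → p x y) : NoncrossingKL p := by
  intro a b c d hab hbc hcd hac hbd
  have hac' : a ≠ c := by rintro rfl; omega
  have hbd' : b ≠ d := by rintro rfl; omega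
  exact p.trans (p.symm (h a c hac hac')) (h b d hbd hbd')

lemma exists_isLeft_eq_of_pairwise_ne {α β : Type*} {a b c : α ⊕ β}
    (hab : a ≠ b) (hac : a ≠ c) (hbc : b ≠ c) :
    ∃ y ∈ ({b, c} : Set (α ⊕ β)), ∃ y', y' ≠ y ∧ y'.isLeft = y.isLeft := by
  by_cases hcb : c.isLeft = b.isLeft
  · exact ⟨b, Or.inl rfl, c, hbc.symm, hcb⟩
  by_cases hab' : a.isLeft = b.isLeft
  · exact ⟨b, Or.inl rfl, a, hab, hab'⟩
  refine ⟨c, Or.inr rfl, a, hac, ?_⟩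
  rcases a with a | a <;> rcases b with b | b <;> rcases c with c | c <;> simp_all

namespace PartitionCategory

variable (C : PartitionCategory)

lemma idPart_mem (m : ℕ) : idPart m ∈ C.mem m m := by
  induction m with
  | zero =>
    have : idPart 0 = compPart (⊤ : PartitionKL 0 2) (flipPart ⊤) := by
      ext (x | x) <;> exact x.elim0
    rw [this]
    exact C.comp_mem C.semicircle_mem (C.flip_mem C.semicircle_mem)
  | succ m ih =>
    rw [← tensorPart_idPart_top]
    exact C.tensor_mem ih C.id_mem

lemma capAt_mem (j m : ℕ) : capAt j m ∈ C.mem (j + 2 + m) (j + m) := by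
  have capLast_mem : capLast j ∈ C.mem (j + 2) j := by
    rw [← tensorPart_idPart_flipPart_top]
    exact C.tensor_mem (C.idPart_mem j) (C.flip_mem C.semicircle_mem)
  exact C.tensor_mem capLast_mem (C.idPart_mem m)

def HasBlockAtLeast (n m : ℕ) : Prop :=
  ∃ k l, k + l = n ∧ ∃ p ∈ C.mem k l, ∃ x, m ≤ {y | p x y}.ncard

variable {C} {k l m : ℕ} {p : PartitionKL k l}

lemma hasBlockAtLeast_of_cap (hp : p ∈ C.mem k l) (hm : 0 < m) {u : ℕ} (hu : u + 1 < l)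
    (h : (∃ x, ¬ p x (.inr ⟨u, by omega⟩) ∧ ¬ p x (.inr ⟨u + 1, hu⟩) ∧
        m ≤ {y | p x y}.ncard) ∨
      m + 2 ≤ ({y | p (.inr ⟨u, by omega⟩) y} ∪ {y | p (.inr ⟨u + 1, hu⟩) y}).ncard) :
    C.HasBlockAtLeast (k + l - 2) m := by
  obtain ⟨n, rfl⟩ : ∃ n, l = u + 2 + n := ⟨l - u - 2, by omega⟩
  refine ⟨k, u + n, by omega, compPart p (capAt u n), C.comp_mem hp (C.capAt_mem u n), ?_⟩
  rcases h with ⟨x, hxu, hxu', hx⟩ | hunion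
  · obtain ⟨z, rfl⟩ := exists_map_skipPair_eq (fun h => hxu (h ▸ p.refl _))
      (fun h => hxu' (h ▸ p.refl _))
    exact ⟨z, by rwa [ncard_compPart_capAt_of_not_rel p z hxu hxu']⟩
  · set pair : Set (Fin k ⊕ Fin (u + 2 + n)) := {.inr ⟨u, by omega⟩, .inr ⟨u + 1, hu⟩}
    obtain ⟨y, hy, hy_pair⟩ : (({y | p (.inr ⟨u, by omega⟩) y} ∪
        {y | p (.inr ⟨u + 1, hu⟩) y}) \ pair).Nonempty := by
      apply Set.nonempty_of_ncard_ne_zero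
      have := Set.le_ncard_sdiff pair
        ({y | p (.inr ⟨u, by omega⟩) y} ∪ {y | p (.inr ⟨u + 1, hu⟩) y})
      rw [Set.ncard_pair (by simp)] at this
      omega
    simp only [pair, Set.mem_insert_iff, Set.mem_singleton_iff, not_or] at hy_pair
    obtain ⟨z, rfl⟩ := exists_map_skipPair_eq hy_pair.1 hy_pair.2
    have := ncard_compPart_capAt_of_rel p z (hy.imp p.symm p.symm)
    exact ⟨z, by omega⟩

lemma hasBlockAtLeast_of_inr (hp : p ∈ C.mem k l) (hm : 0 < m) {x : Fin k ⊕ Fin l}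
    (hx : m ≤ {y | p x y}.ncard) {w : Fin l} (hl : 2 ≤ l)
    (hw : m + 2 ≤ ({y | p x y} ∪ {y | p (.inr w) y}).ncard) :
    C.HasBlockAtLeast (k + l - 2) m := by
  obtain ⟨u, hu, hwu⟩ :
      ∃ u, ∃ hu : u + 1 < l, w = ⟨u, by omega⟩ ∨ w = ⟨u + 1, hu⟩ := by
    by_cases hw : w.val + 1 < l
    · exact ⟨w.val, hw, Or.inl rfl⟩
    · exact ⟨w.val - 1, by omega, Or.inr (Fin.ext (by simp; omega))⟩
  set pair := {y | p (.inr ⟨u, by omega⟩) y} ∪ {y | p (.inr ⟨u + 1, hu⟩) y}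
  apply hasBlockAtLeast_of_cap hp hm hu
  by_cases hxu : p x (.inr ⟨u, by omega⟩) ∨ p x (.inr ⟨u + 1, hu⟩)
  · right
    have hx_sub : {y | p x y} ⊆ pair := fun y hy =>
      hxu.imp (fun h => p.trans (p.symm h) hy) (fun h => p.trans (p.symm h) hy)
    have hw_sub : {y | p (.inr w) y} ⊆ pair := by
      rcases hwu with h | h <;> rw [h]
      exacts [Set.subset_union_left, Set.subset_union_right]
    exact hw.trans (Set.ncard_le_ncard (Set.union_subset hx_sub hw_sub))
  · rw [not_or] at hxu
    exact Or.inl ⟨x, hxu.1, hxu.2, hx⟩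

lemma hasBlockAtLeast_of_inl (hp : p ∈ C.mem k l) (hm : 0 < m) {x : Fin k ⊕ Fin l}
    (hx : m ≤ {y | p x y}.ncard) {w : Fin k} (hk : 2 ≤ k)
    (hw : m + 2 ≤ ({y | p x y} ∪ {y | p (.inl w) y}).ncard) :
    C.HasBlockAtLeast (k + l - 2) m := by
  rw [add_comm]
  refine hasBlockAtLeast_of_inr (C.flip_mem hp) hm (x := x.swap) (w := w) ?_ hk ?_
  · rwa [setOf_flipPart_swap, ncard_preimage_swap]
  · rwa [← Sum.swap_inl, setOf_flipPart_swap, setOf_flipPart_swap, ← Set.preimage_union,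
      ncard_preimage_swap]

lemma hasBlockAtLeast_of_isLeft_eq (hp : p ∈ C.mem k l) (hm : 0 < m) {x : Fin k ⊕ Fin l}
    (hx : m ≤ {y | p x y}.ncard) {y y' : Fin k ⊕ Fin l} (hne : y' ≠ y)
    (hrow : y'.isLeft = y.isLeft) (hy : m + 2 ≤ ({z | p x z} ∪ {z | p y z}).ncard) :
    C.HasBlockAtLeast (k + l - 2) m := by
  rcases y with w | w <;> rcases y' with w' | w'
  · have : w'.val ≠ w.val := fun h => hne (by rw [Fin.ext h])
    exact hasBlockAtLeast_of_inl hp hm hx (by omega) hy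
  · simp at hrow
  · simp at hrow
  · have : w'.val ≠ w.val := fun h => hne (by rw [Fin.ext h])
    exact hasBlockAtLeast_of_inr hp hm hx (by omega) hy

lemma hasBlockAtLeast_of_not_noncrossing_or_large (hp : p ∈ C.mem k l) (hm : 0 < m)
    {x : Fin k ⊕ Fin l} (hx : m ≤ {y | p x y}.ncard)
    (h : ¬ (NoncrossingKL p ∧ {y | p x y}.ncard ≤ m + 1)) :
    C.HasBlockAtLeast (k + l - 2) m := by
  by_cases hlarge : m + 2 ≤ {y | p x y}.ncard
  · obtain ⟨a, b, c, -, -, -, hab, hac, hbc⟩ :=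
      (Set.two_lt_ncard_iff (Set.toFinite _)).1 (by omega : 2 < {y | p x y}.ncard)
    obtain ⟨y, -, y', hne, hrow⟩ := exists_isLeft_eq_of_pairwise_ne hab hac hbc
    exact hasBlockAtLeast_of_isLeft_eq hp hm hx hne hrow
      (hlarge.trans (Set.ncard_le_ncard Set.subset_union_left))
  · obtain ⟨w, z, hwz, hwz_ne, hxw⟩ : ∃ w z, p w z ∧ w ≠ z ∧ ¬ p x w := by
      by_contra! hall
      exact h ⟨noncrossingKL_of_one_nontrivial_block x hall, by omega⟩
    have hxz : ¬ p x z := fun h => hxw (p.trans h (p.symm hwz))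
    obtain ⟨y, hy, y', hne, hrow⟩ := exists_isLeft_eq_of_pairwise_ne (a := x) (b := w) (c := z)
      (by rintro rfl; exact hxw (p.refl x)) (by rintro rfl; exact hxz (p.refl x)) hwz_ne
    have hxy : ¬ p x y := by rcases hy with rfl | rfl <;> assumption
    have hy_large : 2 ≤ {z | p y z}.ncard := by
      rw [← Set.ncard_pair hwz_ne]
      refine Set.ncard_le_ncard ?_
      rcases hy with rfl | rfl <;> rintro v (rfl | rfl)
      exacts [p.refl _, hwz, p.symm hwz, p.refl _]
    have hdisj : Disjoint {z | p x z} {z | p y z} :=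
      Set.disjoint_left.2 fun v hxv hyv => hxy (p.trans hxv (p.symm hyv))
    apply hasBlockAtLeast_of_isLeft_eq hp hm hx hne hrow
    rw [Set.ncard_union_eq hdisj]
    omega

theorem HasBlockAtLeast.mem_lambdaK (hm : 0 < m) {n : ℕ} (h : C.HasBlockAtLeast n m) :
    m ∈ lambdaK C ∨ m + 1 ∈ lambdaK C := by
  induction n using Nat.strong_induction_on with
  | _ n ih =>
    obtain ⟨k, l, rfl, p, hp, x, hx⟩ := h
    by_cases hdone : NoncrossingKL p ∧ {y | p x y}.ncard ≤ m + 1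
    · obtain hsize | hsize : {y | p x y}.ncard = m ∨ {y | p x y}.ncard = m + 1 := by omega
      · exact Or.inl ⟨k, l, p, hp, hdone.1, x, hsize.symm⟩
      · exact Or.inr ⟨k, l, p, hp, hdone.1, x, hsize.symm⟩
    · have : 0 < k + l := by rcases x with x | x <;> have := x.isLt <;> omega
      exact ih _ (by omega) (hasBlockAtLeast_of_not_noncrossing_or_large hp hm hx hdone)

end PartitionCategory

/-- `Λ_k ⊆ Λ_g ⊆ Λ_k ∪ (Λ_k − 1)`. -/
theorem block_sizes_inclusions (C : PartitionCategory) :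
    lambdaK C ⊆ lambdaG C ∧
    lambdaG C ⊆ lambdaK C ∪ {n | n + 1 ∈ lambdaK C} := by
  refine ⟨fun n ⟨k, l, p, hp, _, x, hn⟩ => ⟨k, l, p, hp, x, hn⟩, ?_⟩
  rintro n ⟨k, l, p, hp, x, rfl⟩
  have hblock : C.HasBlockAtLeast (k + l) {y | p x y}.ncard := ⟨k, l, rfl, p, hp, x, le_rfl⟩
  exact hblock.mem_lambdaK ((Set.ncard_pos (Set.toFinite _)).2 ⟨x, p.refl x⟩)
end

section
/- If every partition in a category of partitions D that is noncrossing has an even number of total legs, then every partition in D has an even number of total legs. -/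
/- Capping two legs with a semicircle keeps a partition inside the category and changes the
number of legs by two, so if `D(k, l)` is nonempty then so is `D(k % 2, l % 2)`. If `k + l`
were odd, the latter would consist of partitions with a single leg, which are noncrossing with
an odd number of legs. -/

lemma noncrossing_of_add_le_one {k l : ℕ} (hkl : k + l ≤ 1) (p : PartitionKL k l) :
    NoncrossingKL p := by
  intro a b _ _ hab _ _ _ _
  exfalso
  rcases a with a | a <;> rcases b with b | b <;> simp only [ord] at hab <;> omega

namespace PartitionCategory

variable (C : PartitionCategory)

lemma mem_diag_nonempty : ∀ m, (C.mem m m).Nonempty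
  | 0 => ⟨_, C.comp_mem C.semicircle_mem (C.flip_mem C.semicircle_mem)⟩
  | m + 1 =>
    have ⟨_, hp⟩ := mem_diag_nonempty m
    ⟨_, C.tensor_mem hp C.id_mem⟩

lemma mem_cap_nonempty (m : ℕ) : (C.mem (m + 2) m).Nonempty :=
  have ⟨_, hp⟩ := C.mem_diag_nonempty m
  ⟨_, C.tensor_mem hp (C.flip_mem C.semicircle_mem)⟩

variable {C}

lemma mem_nonempty_of_add_two_left {k l : ℕ} (h : (C.mem (k + 2) l).Nonempty) :
    (C.mem k l).Nonempty :=
  have ⟨_, hp⟩ := h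
  have ⟨_, hcap⟩ := C.mem_cap_nonempty k
  ⟨_, C.comp_mem (C.flip_mem hcap) hp⟩

lemma mem_nonempty_of_add_two_right {k l : ℕ} (h : (C.mem k (l + 2)).Nonempty) :
    (C.mem k l).Nonempty :=
  have ⟨_, hp⟩ := h
  have ⟨_, hcap⟩ := C.mem_cap_nonempty l
  ⟨_, C.comp_mem hp hcap⟩

lemma mem_nonempty_of_add_two_mul {k l : ℕ} (m n : ℕ)
    (h : (C.mem (k + 2 * m) (l + 2 * n)).Nonempty) : (C.mem k l).Nonempty := by
  induction m generalizing n with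
  | zero =>
    induction n with
    | zero => exact h
    | succ n ih => exact ih (mem_nonempty_of_add_two_right h)
  | succ m ih => exact ih n (mem_nonempty_of_add_two_left h)

lemma mem_mod_two_nonempty {k l : ℕ} (h : (C.mem k l).Nonempty) :
    (C.mem (k % 2) (l % 2)).Nonempty := by
  rw [← Nat.mod_add_div k 2, ← Nat.mod_add_div l 2] at h
  exact mem_nonempty_of_add_two_mul _ _ h

end PartitionCategory

/-- If every noncrossing partition in a category of partitions has an even
total number of legs, then every partition in the category has an even total
number of legs. -/
theorem even_of_noncrossing_even (C : PartitionCategory)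
    (h : ∀ k l, ∀ p ∈ C.mem k l, NoncrossingKL p → Even (k + l)) :
    ∀ k l, ∀ p ∈ C.mem k l, Even (k + l) := by
  intro k l p hp
  obtain ⟨q, hq⟩ := C.mem_mod_two_nonempty ⟨p, hp⟩
  rw [Nat.even_iff]
  by_contra hodd
  have hone : k % 2 + l % 2 = 1 := by omega
  have heven := h _ _ q hq (noncrossing_of_add_le_one hone.le q)
  rw [hone] at heven
  exact Nat.not_even_one heven
end
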